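/- arXiv:1009.2677 — 5 statements merged into one kernel-verified Lean document; each statement's English description precedes it below -/
import Mathlib

section
/- Let V be a real inner product space of dimension 2n (n ≥ 1) with an orthogonal complex structure J, and let R be a curvature-like tensor on V. If R satisfies the identity R(x,y,z,u) = R(x,y,Jz,Ju) + R(x,Jy,z,Ju) + R(Jx,y,z,Ju) for all x, y, z, u ∈ V, then R satisfies R(x,y,z,u) = R(Jx,Jy,Jz,Ju) for all x, y, z, u ∈ V. -/
open scoped RealInnerProductSpace

/-- A curvature-like tensor on a real inner product space `V`, presented as a
(4-fold) multilinear map via iterated linear maps: it is antisymmetric in the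
first two and in the last two arguments, symmetric under swapping the two
pairs, and satisfies the first Bianchi identity. -/
def IsCurvatureLike {V : Type*} [NormedAddCommGroup V] [InnerProductSpace ℝ V]
    (R : V →ₗ[ℝ] V →ₗ[ℝ] V →ₗ[ℝ] V →ₗ[ℝ] ℝ) : Prop :=
  (∀ x y z u : V, R x y z u = - R y x z u) ∧
  (∀ x y z u : V, R x y z u = - R x y u z) ∧
  (∀ x y z u : V, R x y z u = R z u x y) ∧
  (∀ x y z u : V, R x y z u + R y z x u + R z x y u = 0)

/- Feeding the identity back into its own three right-hand terms expresses them, and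
`R (J x) (J y) (J z) (J u)`, through the three mixed terms `p, q, r` below; the identity itself
then forces `2 (p + q + r) = 2 R x y z u`, whence `R (J x) (J y) (J z) (J u) = R x y z u`. -/
theorem LinearMap.apply_eq_apply_map_of_eq_add_add {K M : Type*} [Field K] [NeZero (2 : K)]
    [AddCommGroup M] [Module K M] (J : M →ₗ[K] M) (hJ : ∀ x, J (J x) = -x)
    (R : M →ₗ[K] M →ₗ[K] M →ₗ[K] M →ₗ[K] K)
    (h : ∀ x y z u : M,
      R x y z u = R x y (J z) (J u) + R x (J y) z (J u) + R (J x) y z (J u))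
    (x y z u : M) : R x y z u = R (J x) (J y) (J z) (J u) := by
  set p := R x (J y) (J z) u
  set q := R (J x) y (J z) u
  set r := R (J x) (J y) z u
  have hb : R x y (J z) (J u) = R x y z u - p - q := by
    have := h x y (J z) (J u)
    simp only [hJ, map_neg, LinearMap.neg_apply, neg_neg] at this
    linear_combination this
  have hc : R x (J y) z (J u) = R x y z u - p - r := by
    have := h x (J y) z (J u)
    simp only [hJ, map_neg, LinearMap.neg_apply, neg_neg] at this
    linear_combination this
  have hd : R (J x) y z (J u) = R x y z u - q - r := by
    -- `map_neg` fails in the first slot (no `AddCommGroup` instance is found on the triply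
    -- nested space of linear maps), hence the detour through `(-1) • x`.
    have hneg : R (-x) y z (-u) = R x y z u := by
      rw [← neg_one_smul K x, map_smul]
      simp
    have := h (J x) y z (J u)
    simp only [hJ, map_neg, hneg] at this
    linear_combination this
  have hs : R (J x) (J y) (J z) (J u) = p + R x y (J z) (J u) + R x (J y) z (J u) := by
    have := h x (J y) (J z) u
    simp only [hJ, map_neg, LinearMap.neg_apply] at this
    linear_combination -this
  have hsum : p + q + r = R x y z u := by
    have h2 : (2 : K) * (p + q + r - R x y z u) = 0 := by
      linear_combination h x y z u + hb + hc + hd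
    exact sub_eq_zero.mp ((mul_eq_zero.mp h2).resolve_left two_ne_zero)
  linear_combination hsum - hs - hb - hc

theorem stmt_0_general {V : Type*} [NormedAddCommGroup V] [InnerProductSpace ℝ V]
    (J : V →ₗ[ℝ] V)
    (hJ2 : ∀ x : V, J (J x) = -x)
    (R : V →ₗ[ℝ] V →ₗ[ℝ] V →ₗ[ℝ] V →ₗ[ℝ] ℝ)
    (h1 : ∀ x y z u : V,
      R x y z u = R x y (J z) (J u) + R x (J y) z (J u) + R (J x) y z (J u)) :
    ∀ x y z u : V, R x y z u = R (J x) (J y) (J z) (J u) :=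
  J.apply_eq_apply_map_of_eq_add_add hJ2 R h1

theorem stmt_0 {V : Type*} [NormedAddCommGroup V] [InnerProductSpace ℝ V]
    [FiniteDimensional ℝ V] (n : ℕ) (hn : 1 ≤ n)
    (hdim : Module.finrank ℝ V = 2 * n)
    (J : V →ₗ[ℝ] V)
    (hJ2 : ∀ x : V, J (J x) = -x)
    (hJorth : ∀ x y : V, ⟪J x, J y⟫ = ⟪x, y⟫)
    (R : V →ₗ[ℝ] V →ₗ[ℝ] V →ₗ[ℝ] V →ₗ[ℝ] ℝ)
    (hR : IsCurvatureLike R)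
    (h1 : ∀ x y z u : V,
      R x y z u = R x y (J z) (J u) + R x (J y) z (J u) + R (J x) y z (J u)) :
    ∀ x y z u : V, R x y z u = R (J x) (J y) (J z) (J u) :=
  stmt_0_general J hJ2 R h1
end

section
/- Let V be a real inner product space of dimension 2n (n ≥ 2) with an orthogonal complex structure J, and let R be a curvature-like tensor on V satisfying R(x,y,z,u) = R(Jx,Jy,Jz,Ju) for all x, y, z, u. If R has constant antiholomorphic sectional curvature ν, then R = (1/6)ψ + ν R₁ − ((2n−1)/3) ν R₂, where ψ, R₁, R₂ are built from the inner product, J and the Ricci tensor S of R. -/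
open scoped RealInnerProductSpace

namespace LinearMap

variable {R M P : Type*} [CommSemiring R] [AddCommMonoid M] [Module R M]
  [AddCommMonoid P] [Module R P]

def mk₄ (f : M → M → M → M → P)
    (h₁ : ∀ y z u, IsLinearMap R (f · y z u)) (h₂ : ∀ x z u, IsLinearMap R (f x · z u))
    (h₃ : ∀ x y u, IsLinearMap R (f x y · u)) (h₄ : ∀ x y z, IsLinearMap R (f x y z ·)) :
    M →ₗ[R] M →ₗ[R] M →ₗ[R] M →ₗ[R] P :=
  mk₂ R (fun x y => mk₂ R (fun z u => f x y z u) (fun z z' u => (h₃ x y u).map_add z z')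
      (fun c z u => (h₃ x y u).map_smul c z) (fun z => (h₄ x y z).map_add)
      (fun c z => (h₄ x y z).map_smul c))
    (fun x x' y => by ext z u; exact (h₁ y z u).map_add x x')
    (fun c x y => by ext z u; exact (h₁ y z u).map_smul c x)
    (fun x y y' => by ext z u; exact (h₂ x z u).map_add y y')
    (fun c x y => by ext z u; exact (h₂ x z u).map_smul c y)

@[simp]
theorem mk₄_apply (f : M → M → M → M → P) (h₁ : ∀ y z u, IsLinearMap R (f · y z u))
    (h₂ : ∀ x z u, IsLinearMap R (f x · z u)) (h₃ : ∀ x y u, IsLinearMap R (f x y · u))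
    (h₄ : ∀ x y z, IsLinearMap R (f x y z ·)) (x y z u : M) :
    mk₄ f h₁ h₂ h₃ h₄ x y z u = f x y z u := rfl

end LinearMap

section

variable {V : Type*} [NormedAddCommGroup V] [InnerProductSpace ℝ V]

theorem OrthonormalBasis.sum_inner_mul_apply {ι : Type*} [Fintype ι]
    (e : OrthonormalBasis ι ℝ V) (f : V →ₗ[ℝ] ℝ) (v : V) :
    ∑ i, ⟪v, e i⟫ * f (e i) = f v := by
  conv_rhs => rw [← e.sum_repr' v]
  simp [real_inner_comm]

structure IsOrthogonalComplexStructure (J : V →ₗ[ℝ] V) : Prop where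
  apply_apply : ∀ x, J (J x) = -x
  inner_apply_apply : ∀ x y, ⟪J x, J y⟫ = ⟪x, y⟫

namespace IsOrthogonalComplexStructure

variable {J : V →ₗ[ℝ] V}

theorem inner_apply_left (hJ : IsOrthogonalComplexStructure J) (a b : V) :
    ⟪J a, b⟫ = -⟪J b, a⟫ := by
  rw [← hJ.inner_apply_apply, hJ.apply_apply, inner_neg_left, real_inner_comm]

theorem inner_apply_self (hJ : IsOrthogonalComplexStructure J) (a : V) : ⟪J a, a⟫ = 0 := by
  linarith [hJ.inner_apply_left a a]

end IsOrthogonalComplexStructure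

theorem inner_inner_self_smul_sub_smul (a v : V) : ⟪a, ⟪a, a⟫ • v - ⟪a, v⟫ • a⟫ = 0 := by
  rw [inner_sub_right, real_inner_smul_right, real_inner_smul_right]; ring

section Ricci

variable {ι : Type*} [Fintype ι]

noncomputable def ricci (e : OrthonormalBasis ι ℝ V) :
    (V →ₗ[ℝ] V →ₗ[ℝ] V →ₗ[ℝ] V →ₗ[ℝ] ℝ) →ₗ[ℝ] V →ₗ[ℝ] V →ₗ[ℝ] ℝ where
  toFun T := ∑ i, (T.flip (e i)).flip (e i)
  map_add' T T' := by ext; simp [Finset.sum_add_distrib]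
  map_smul' c T := by ext; simp [Finset.mul_sum]

@[simp]
theorem ricci_apply (e : OrthonormalBasis ι ℝ V) (T : V →ₗ[ℝ] V →ₗ[ℝ] V →ₗ[ℝ] V →ₗ[ℝ] ℝ)
    (x y : V) : ricci e T x y = ∑ i, T x (e i) (e i) y := by
  simp [ricci]

end Ricci

namespace IsCurvatureLike

variable {ι : Type*} [Fintype ι] {J : V →ₗ[ℝ] V} {T T' : V →ₗ[ℝ] V →ₗ[ℝ] V →ₗ[ℝ] V →ₗ[ℝ] ℝ}

theorem antisymm_left (hT : IsCurvatureLike T) (x y z u : V) : T x y z u = -T y x z u :=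
  hT.1 x y z u

theorem antisymm_right (hT : IsCurvatureLike T) (x y z u : V) : T x y z u = -T x y u z :=
  hT.2.1 x y z u

theorem swap_pairs (hT : IsCurvatureLike T) (x y z u : V) : T x y z u = T z u x y :=
  hT.2.2.1 x y z u

theorem bianchi (hT : IsCurvatureLike T) (x y z u : V) :
    T x y z u + T y z x u + T z x y u = 0 :=
  hT.2.2.2 x y z u

theorem apply_self_left (hT : IsCurvatureLike T) (x z u : V) : T x x z u = 0 := by
  linarith [hT.antisymm_left x x z u]

theorem apply_self_right (hT : IsCurvatureLike T) (x y z : V) : T x y z z = 0 := by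
  linarith [hT.antisymm_right x y z z]

theorem apply_comm_middle (hT : IsCurvatureLike T) (x y z : V) : T x y z x = T x z y x := by
  rw [hT.swap_pairs, hT.antisymm_left, hT.antisymm_right, neg_neg]

theorem apply_reverse (hT : IsCurvatureLike T) (x y z u : V) : T x y z u = T u z y x := by
  rw [hT.swap_pairs, hT.antisymm_left, hT.antisymm_right, neg_neg]

theorem add (hT : IsCurvatureLike T) (hT' : IsCurvatureLike T') : IsCurvatureLike (T + T') := by
  refine ⟨fun x y z u => ?_, fun x y z u => ?_, fun x y z u => ?_, fun x y z u => ?_⟩ <;>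
    simp only [LinearMap.add_apply]
  · rw [hT.antisymm_left, hT'.antisymm_left]; ring
  · rw [hT.antisymm_right, hT'.antisymm_right]; ring
  · rw [hT.swap_pairs, hT'.swap_pairs]
  · linear_combination hT.bianchi x y z u + hT'.bianchi x y z u

theorem smul (hT : IsCurvatureLike T) (c : ℝ) : IsCurvatureLike (c • T) := by
  refine ⟨fun x y z u => ?_, fun x y z u => ?_, fun x y z u => ?_, fun x y z u => ?_⟩ <;>
    simp only [LinearMap.smul_apply, smul_eq_mul]
  · rw [hT.antisymm_left]; ring
  · rw [hT.antisymm_right]; ring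
  · rw [hT.swap_pairs]
  · linear_combination c * hT.bianchi x y z u

theorem ricci_comm (hT : IsCurvatureLike T) (e : OrthonormalBasis ι ℝ V)
    (x y : V) : ricci e T x y = ricci e T y x := by
  simp only [ricci_apply]
  exact Finset.sum_congr rfl fun i _ => hT.apply_reverse x (e i) (e i) y

theorem eq_zero_of_apply_eq_zero (hT : IsCurvatureLike T) (h : ∀ x y, T x y y x = 0) : T = 0 := by
  have hxyzx : ∀ x y z, T x y z x = 0 := fun x y z => by
    have := h x (y + z)
    simp only [map_add, LinearMap.add_apply] at this
    linarith [h x y, h x z, hT.apply_comm_middle x y z]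
  have houter : ∀ x y z u, T x y z u = -T u y z x := fun x y z u => by
    have := hxyzx (x + u) y z
    simp only [map_add, LinearMap.add_apply] at this
    linarith [hxyzx x y z, hxyzx u y z]
  have hmiddle : ∀ x y z u, T x y z u = -T x z y u := fun x y z u => by
    rw [houter, hT.swap_pairs u, houter, hT.swap_pairs, houter, neg_neg]
  ext x y z u
  simp only [LinearMap.zero_apply]
  linarith [hT.bianchi x y z u, hmiddle y z x u, hT.antisymm_left x y z u, hmiddle z x y u,
    hT.antisymm_left z y x u]

theorem apply_same_outer_eq_zero (hT : IsCurvatureLike T)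
    (hT0 : ∀ x y, ⟪J x, y⟫ = 0 → T x y y x = 0) {x y z : V}
    (hy : ⟪J x, y⟫ = 0) (hz : ⟪J x, z⟫ = 0) : T x y z x = 0 := by
  have h := hT0 x (y + z) (by rw [inner_add_right, hy, hz, add_zero])
  simp only [map_add, LinearMap.add_apply] at h
  linarith [hT0 x y hy, hT0 x z hz, hT.apply_comm_middle x y z]

theorem apply_same_middle_eq_zero (hT : IsCurvatureLike T)
    (hT0 : ∀ x y, ⟪J x, y⟫ = 0 → T x y y x = 0) {x y w : V}
    (hx : ⟪J x, y⟫ = 0) (hw : ⟪J w, y⟫ = 0) : T x y y w = 0 := by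
  have h := hT0 (x + w) y (by rw [map_add, inner_add_left, hx, hw, add_zero])
  simp only [map_add, LinearMap.add_apply] at h
  linarith [hT0 x y hx, hT0 w y hw, hT.apply_reverse w y y x]

theorem sq_inner_self_mul_apply (hT : IsCurvatureLike T) (hJ : IsOrthogonalComplexStructure J)
    (hT0 : ∀ x y, ⟪J x, y⟫ = 0 → T x y y x = 0) (x y z : V) :
    ⟪x, x⟫ ^ 2 * T x y z x =
      ⟪x, x⟫ * (⟪J x, y⟫ * T x (J x) z x + ⟪J x, z⟫ * T x (J x) y x)
        - ⟪J x, y⟫ * ⟪J x, z⟫ * T x (J x) (J x) x := by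
  have h := hT.apply_same_outer_eq_zero hT0 (inner_inner_self_smul_sub_smul (J x) y)
    (inner_inner_self_smul_sub_smul (J x) z)
  simp only [map_sub, map_smul, LinearMap.sub_apply, LinearMap.smul_apply, smul_eq_mul,
    hJ.inner_apply_apply] at h
  rw [hT.apply_comm_middle x y (J x)] at h
  linear_combination h

theorem apply_map_map_eq_zero (hT : IsCurvatureLike T) (hJ : IsOrthogonalComplexStructure J)
    (hT0 : ∀ x y, ⟪J x, y⟫ = 0 → T x y y x = 0) (e : OrthonormalBasis ι ℝ V)
    (hric : ricci e T = 0) (x : V) : T x (J x) (J x) x = 0 := by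
  have hsum : ∑ i, T x (e i) (e i) x = 0 := by simpa using congr($hric x x)
  have hexpand := e.sum_inner_mul_apply ((T x (J x)).flip x) (J x)
  simp only [LinearMap.flip_apply] at hexpand
  have h : ⟪x, x⟫ * T x (J x) (J x) x = 0 := by
    calc ⟪x, x⟫ * T x (J x) (J x) x
        = 2 * ⟪x, x⟫ * ∑ i, ⟪J x, e i⟫ * T x (J x) (e i) x
          - (∑ i, ⟪J x, e i⟫ * ⟪e i, J x⟫) * T x (J x) (J x) x := by
          rw [hexpand, e.sum_inner_mul_inner, hJ.inner_apply_apply]; ring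
      _ = ∑ i, ⟪x, x⟫ ^ 2 * T x (e i) (e i) x := by
          rw [Finset.mul_sum, Finset.sum_mul, ← Finset.sum_sub_distrib]
          refine Finset.sum_congr rfl fun i _ => ?_
          rw [hT.sq_inner_self_mul_apply hJ hT0, real_inner_comm (J x) (e i)]; ring
      _ = 0 := by rw [← Finset.mul_sum, hsum, mul_zero]
  rcases mul_eq_zero.1 h with hx | h
  · simp [inner_self_eq_zero.1 hx]
  · exact h

theorem sq_inner_self_mul_apply_map_add (hT : IsCurvatureLike T)
    (hJ : IsOrthogonalComplexStructure J)
    (hTJ : ∀ x y z u, T x y z u = T (J x) (J y) (J z) (J u))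
    (hT0 : ∀ x y, ⟪J x, y⟫ = 0 → T x y y x = 0) {x y : V} (hxy : ⟪J x, y⟫ = 0) :
    ⟪x, x⟫ ^ 2 * T x y y (J y) + ⟪x, x⟫ * ⟪y, y⟫ * T x (J x) y x = 0 := by
  have hyx : ⟪J y, x⟫ = 0 := by rw [hJ.inner_apply_left, hxy, neg_zero]
  have hxy' : ⟪x, J y⟫ = 0 := by rw [real_inner_comm, hyx]
  have hq : ∀ t : ℝ, T (J x + t • y) ((t * ⟪y, y⟫) • x + ⟪x, x⟫ • J y)
      ((t * ⟪y, y⟫) • x + ⟪x, x⟫ • J y) (J x + t • y) = 0 := fun t => by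
    refine hT0 _ _ ?_
    simp only [map_add, map_smul, hJ.apply_apply, inner_add_left, inner_add_right,
      real_inner_smul_left, real_inner_smul_right, inner_neg_left, hJ.inner_apply_apply, hyx,
      hxy']
    ring
  have h₁ := hq 1
  have h₂ := hq (-1)
  have h₃ := hq 2
  have h₄ := hq (-2)
  simp only [map_add, map_smul, LinearMap.add_apply, LinearMap.smul_apply, smul_eq_mul]
    at h₁ h₂ h₃ h₄
  have hyJ : T (J x) (J y) (J y) y = -T x y y (J y) := by
    rw [hTJ x y y (J y), hJ.apply_apply, map_neg, neg_neg]
  have hxJ : T (J x) x (J y) (J x) = -T x (J x) y x := by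
    rw [hTJ x (J x) y x, hJ.apply_apply, map_neg, LinearMap.neg_apply, LinearMap.neg_apply,
      neg_neg]
  -- the coefficient of `t` in the quartic `hq t`, extracted from `t = ±1, ±2`
  linear_combination (-1 / 3 : ℝ) * h₁ + (1 / 3 : ℝ) * h₂ + (1 / 24 : ℝ) * h₃
    + (-1 / 24 : ℝ) * h₄ + (⟪x, x⟫ ^ 2 / 2) * hT.apply_reverse y (J y) (J y) (J x)
    - (⟪x, x⟫ * ⟪y, y⟫ / 2) * hT.apply_comm_middle (J x) x (J y)
    + ⟪x, x⟫ ^ 2 * hyJ + ⟪x, x⟫ * ⟪y, y⟫ * hxJ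

theorem inner_self_mul_apply_same_middle (hT : IsCurvatureLike T)
    (hJ : IsOrthogonalComplexStructure J)
    (hTJ : ∀ x y z u, T x y z u = T (J x) (J y) (J z) (J u))
    (hT0 : ∀ x y, ⟪J x, y⟫ = 0 → T x y y x = 0) {x y : V} (hx : x ≠ 0)
    (hxy : ⟪J x, y⟫ = 0) (w : V) :
    ⟪x, x⟫ * T x y y w = -(⟪J y, w⟫ * T x (J x) y x) := by
  rcases eq_or_ne y 0 with rfl | hy
  · simp
  have hw : ⟪J (⟪J y, J y⟫ • w - ⟪J y, w⟫ • J y), y⟫ = 0 := by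
    rw [hJ.inner_apply_left, inner_inner_self_smul_sub_smul, neg_zero]
  have h := hT.apply_same_middle_eq_zero hT0 hxy hw
  simp only [map_sub, map_smul, smul_eq_mul, hJ.inner_apply_apply] at h
  have hlink := hT.sq_inner_self_mul_apply_map_add hJ hTJ hT0 hxy
  rw [pow_two, mul_assoc, mul_assoc, ← mul_add] at hlink
  have hlink' := (mul_eq_zero.1 hlink).resolve_left (inner_self_ne_zero.2 hx)
  refine mul_left_cancel₀ (inner_self_ne_zero.2 hy) ?_
  linear_combination ⟪x, x⟫ * h + ⟪J y, w⟫ * hlink'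

theorem apply_map_map_add_apply_map_eq_zero (hT : IsCurvatureLike T)
    (hJ : IsOrthogonalComplexStructure J)
    (hTJ : ∀ x y z u, T x y z u = T (J x) (J y) (J z) (J u))
    (hT0 : ∀ x y, ⟪J x, y⟫ = 0 → T x y y x = 0) (e : OrthonormalBasis ι ℝ V)
    (hric : ricci e T = 0) {x : V} (hx : x ≠ 0) (w : V) :
    T x (J x) (J w) x + T x (J x) (J x) w = 0 := by
  have hH := hT.apply_map_map_eq_zero hJ hT0 e hric x
  set f₁ : V →ₗ[ℝ] ℝ := ⟪x, x⟫ ^ 2 • (((T x).flip (J x)).flip w + (T x (J x)).flip w)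
    - (⟪x, x⟫ * T x (J x) (J x) w) • innerₗ V (J x) - (⟪x, x⟫ * ⟪x, w⟫) • (T x (J x)).flip x
  set f₂ : V →ₗ[ℝ] ℝ := ⟪x, x⟫ ^ 2 • (T x (J x)).flip x
  -- the previous lemma for the component of `v` orthogonal to `J x`, written with linear forms
  -- `f₁`, `f₂` so that the trace over `e` is evaluated by `sum_inner_mul_apply`
  have hterm : ∀ v, ⟪x, x⟫ ^ 3 * T x v v w = ⟪J x, v⟫ * f₁ v + ⟪J w, v⟫ * f₂ v := fun v => by
    have h := hT.inner_self_mul_apply_same_middle hJ hTJ hT0 hx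
      (inner_inner_self_smul_sub_smul (J x) v) w
    simp only [map_sub, map_smul, LinearMap.sub_apply, LinearMap.smul_apply, smul_eq_mul,
      hJ.apply_apply, hJ.inner_apply_apply, inner_sub_left, real_inner_smul_left,
      inner_neg_left, hH] at h
    simp only [f₁, f₂, LinearMap.sub_apply, LinearMap.add_apply, LinearMap.smul_apply,
      LinearMap.flip_apply, innerₗ_apply_apply, smul_eq_mul]
    rw [hJ.inner_apply_left v w] at h
    linear_combination h
  have hsum : ∑ i, T x (e i) (e i) w = 0 := by simpa using congr($hric x w)
  have h : ⟪x, x⟫ ^ 3 * 0 = f₁ (J x) + f₂ (J w) := by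
    rw [← hsum, Finset.mul_sum, Finset.sum_congr rfl fun i _ => hterm (e i),
      Finset.sum_add_distrib, e.sum_inner_mul_apply, e.sum_inner_mul_apply]
  simp only [f₁, f₂, LinearMap.sub_apply, LinearMap.add_apply, LinearMap.smul_apply,
    LinearMap.flip_apply, innerₗ_apply_apply, smul_eq_mul, hJ.inner_apply_apply, hH] at h
  have hr : ⟪x, x⟫ ^ 2 ≠ 0 := pow_ne_zero 2 (inner_self_ne_zero.2 hx)
  exact (mul_eq_zero.1 (by linear_combination -h)).resolve_left hr

theorem apply_map_left_eq_zero (hT : IsCurvatureLike T)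
    (hJ : IsOrthogonalComplexStructure J)
    (hTJ : ∀ x y z u, T x y z u = T (J x) (J y) (J z) (J u))
    (hT0 : ∀ x y, ⟪J x, y⟫ = 0 → T x y y x = 0) (e : OrthonormalBasis ι ℝ V)
    (hric : ricci e T = 0) (x w : V) : T x (J x) w x = 0 := by
  rcases eq_or_ne x 0 with rfl | hx
  · simp
  obtain ⟨v, rfl⟩ : ∃ v, J v = w := ⟨-J w, by rw [map_neg, hJ.apply_apply, neg_neg]⟩
  have hk := hT.apply_map_map_add_apply_map_eq_zero hJ hTJ hT0 e hric hx v
  have hb := hT.bianchi x (J x) v (J x)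
  rw [hT.apply_self_right, hT.swap_pairs (J x) v] at hb
  have hj : T x (J x) (J v) x = -T x (J x) v (J x) := by
    rw [hTJ x (J x) (J v) x]
    simp only [hJ.apply_apply, map_neg, LinearMap.neg_apply, neg_neg]
    exact hT.antisymm_left _ _ _ _
  linarith

theorem eq_zero_of_ricci_eq_zero (hT : IsCurvatureLike T)
    (hJ : IsOrthogonalComplexStructure J)
    (hTJ : ∀ x y z u, T x y z u = T (J x) (J y) (J z) (J u))
    (hT0 : ∀ x y, ⟪J x, y⟫ = 0 → T x y y x = 0) (e : OrthonormalBasis ι ℝ V)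
    (hric : ricci e T = 0) : T = 0 := by
  refine hT.eq_zero_of_apply_eq_zero fun x y => ?_
  rcases eq_or_ne x 0 with rfl | hx
  · simp
  have h := hT.sq_inner_self_mul_apply hJ hT0 x y y
  simp only [hT.apply_map_left_eq_zero hJ hTJ hT0 e hric, mul_zero, add_zero, sub_zero] at h
  exact (mul_eq_zero.1 h).resolve_left (pow_ne_zero 2 (inner_self_ne_zero.2 hx))

end IsCurvatureLike

section Tensors

variable {ι : Type*} [Fintype ι] {J : V →ₗ[ℝ] V}

theorem IsOrthogonalComplexStructure.apply_map_left (hJ : IsOrthogonalComplexStructure J)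
    {σ : V →ₗ[ℝ] V →ₗ[ℝ] ℝ} (hσ : ∀ a b, σ a b = σ b a)
    (hσJ : ∀ a b, σ (J a) (J b) = σ a b) (a b : V) : σ (J a) b = -σ (J b) a := by
  rw [hσ, ← hσJ b (J a), hJ.apply_apply, map_neg]

theorem IsOrthogonalComplexStructure.apply_map_self (hJ : IsOrthogonalComplexStructure J)
    {σ : V →ₗ[ℝ] V →ₗ[ℝ] ℝ} (hσ : ∀ a b, σ a b = σ b a)
    (hσJ : ∀ a b, σ (J a) (J b) = σ a b) (a : V) : σ (J a) a = 0 := by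
  linarith [hJ.apply_map_left hσ hσJ a a]

theorem IsOrthogonalComplexStructure.sum_apply_map_map (hJ : IsOrthogonalComplexStructure J)
    (e : OrthonormalBasis ι ℝ V) (B : V →ₗ[ℝ] V →ₗ[ℝ] ℝ) :
    ∑ i, B (J (e i)) (J (e i)) = ∑ i, B (e i) (e i) := by
  have hexpand : ∀ i, B (J (e i)) (J (e i)) = ∑ j, ⟪J (e i), e j⟫ * B (e j) (J (e i)) :=
    fun i => by simpa using (e.sum_inner_mul_apply (B.flip (J (e i))) (J (e i))).symm
  have hcontract : ∀ j, ∑ i, ⟪J (e i), e j⟫ * B (e j) (J (e i)) = B (e j) (e j) := fun j => by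
    have := e.sum_inner_mul_apply (-(B (e j) ∘ₗ J)) (J (e j))
    simp only [LinearMap.neg_apply, LinearMap.comp_apply, hJ.apply_apply, map_neg, neg_neg]
      at this
    rw [← this]
    exact Finset.sum_congr rfl fun i _ => by rw [hJ.inner_apply_left]; ring
  simp_rw [hexpand]
  rw [Finset.sum_comm]
  exact Finset.sum_congr rfl fun j _ => hcontract j

theorem ricci_map_map (hJ : IsOrthogonalComplexStructure J)
    {T : V →ₗ[ℝ] V →ₗ[ℝ] V →ₗ[ℝ] V →ₗ[ℝ] ℝ}
    (hTJ : ∀ x y z u, T x y z u = T (J x) (J y) (J z) (J u)) (e : OrthonormalBasis ι ℝ V)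
    (a b : V) : ricci e T (J a) (J b) = ricci e T a b := by
  have h := hJ.sum_apply_map_map e ((T a).compr₂ (LinearMap.applyₗ b))
  simp only [LinearMap.compr₂_apply, LinearMap.applyₗ_apply_apply] at h
  simp only [ricci_apply, ← h]
  refine Finset.sum_congr rfl fun i _ => ?_
  rw [hTJ a (J (e i))]
  simp only [hJ.apply_apply, map_neg, LinearMap.neg_apply, neg_neg]

variable (V) in
noncomputable def constCurvatureTensor : V →ₗ[ℝ] V →ₗ[ℝ] V →ₗ[ℝ] V →ₗ[ℝ] ℝ :=
  LinearMap.mk₄ (fun x y z u => ⟪y, z⟫ * ⟪x, u⟫ - ⟪x, z⟫ * ⟪y, u⟫)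
    (fun _ _ _ => ⟨fun _ _ => by simp only [inner_add_left]; ring,
      fun _ _ => by simp only [real_inner_smul_left, smul_eq_mul]; ring⟩)
    (fun _ _ _ => ⟨fun _ _ => by simp only [inner_add_left]; ring,
      fun _ _ => by simp only [real_inner_smul_left, smul_eq_mul]; ring⟩)
    (fun _ _ _ => ⟨fun _ _ => by simp only [inner_add_right]; ring,
      fun _ _ => by simp only [real_inner_smul_right, smul_eq_mul]; ring⟩)
    (fun _ _ _ => ⟨fun _ _ => by simp only [inner_add_right]; ring,
      fun _ _ => by simp only [real_inner_smul_right, smul_eq_mul]; ring⟩)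

@[simp]
theorem constCurvatureTensor_apply (x y z u : V) :
    constCurvatureTensor V x y z u = ⟪y, z⟫ * ⟪x, u⟫ - ⟪x, z⟫ * ⟪y, u⟫ :=
  rfl

theorem isCurvatureLike_constCurvatureTensor : IsCurvatureLike (constCurvatureTensor V) := by
  refine ⟨fun x y z u => ?_, fun x y z u => ?_, fun x y z u => ?_, fun x y z u => ?_⟩ <;>
    simp only [constCurvatureTensor_apply]
  · ring
  · ring
  · rw [real_inner_comm x u, real_inner_comm y z, real_inner_comm x z, real_inner_comm y u]; ring
  · rw [real_inner_comm x z, real_inner_comm y z, real_inner_comm x y]; ring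

theorem constCurvatureTensor_map_map (hJ : IsOrthogonalComplexStructure J) (x y z u : V) :
    constCurvatureTensor V (J x) (J y) (J z) (J u) = constCurvatureTensor V x y z u := by
  simp only [constCurvatureTensor_apply, hJ.inner_apply_apply]

theorem ricci_constCurvatureTensor (e : OrthonormalBasis ι ℝ V) (x y : V) :
    ricci e (constCurvatureTensor V) x y = (Fintype.card ι - 1) * ⟪x, y⟫ := by
  have hnorm : ∀ i, ⟪e i, e i⟫ = 1 := fun i => by
    rw [real_inner_self_eq_norm_sq, e.norm_eq_one, one_pow]
  simp only [ricci_apply, constCurvatureTensor_apply, hnorm, one_mul, Finset.sum_sub_distrib,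
    Finset.sum_const, Finset.card_univ, nsmul_eq_mul, e.sum_inner_mul_inner]
  ring

noncomputable def psi (J : V →ₗ[ℝ] V) (σ : V →ₗ[ℝ] V →ₗ[ℝ] ℝ) :
    V →ₗ[ℝ] V →ₗ[ℝ] V →ₗ[ℝ] V →ₗ[ℝ] ℝ :=
  LinearMap.mk₄ (fun x y z u =>
      ⟪J y, z⟫ * σ (J x) u - ⟪J x, z⟫ * σ (J y) u - 2 * ⟪J x, y⟫ * σ (J z) u
        + ⟪J x, u⟫ * σ (J y) z - ⟪J y, u⟫ * σ (J x) z - 2 * ⟪J z, u⟫ * σ (J x) y)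
    (fun _ _ _ => ⟨fun _ _ => by simp only [map_add, LinearMap.add_apply, inner_add_left]; ring,
      fun _ _ => by
        simp only [map_smul, LinearMap.smul_apply, real_inner_smul_left, smul_eq_mul]; ring⟩)
    (fun _ _ _ => ⟨fun _ _ => by
        simp only [map_add, LinearMap.add_apply, inner_add_left, inner_add_right]; ring,
      fun _ _ => by
        simp only [map_smul, LinearMap.smul_apply, real_inner_smul_left, real_inner_smul_right,
          smul_eq_mul]; ring⟩)
    (fun _ _ _ => ⟨fun _ _ => by
        simp only [map_add, LinearMap.add_apply, inner_add_left, inner_add_right]; ring,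
      fun _ _ => by
        simp only [map_smul, LinearMap.smul_apply, real_inner_smul_left, real_inner_smul_right,
          smul_eq_mul]; ring⟩)
    (fun _ _ _ => ⟨fun _ _ => by simp only [map_add, inner_add_right]; ring,
      fun _ _ => by simp only [map_smul, real_inner_smul_right, smul_eq_mul]; ring⟩)

@[simp]
theorem psi_apply (σ : V →ₗ[ℝ] V →ₗ[ℝ] ℝ) (x y z u : V) :
    psi J σ x y z u =
      ⟪J y, z⟫ * σ (J x) u - ⟪J x, z⟫ * σ (J y) u - 2 * ⟪J x, y⟫ * σ (J z) u
        + ⟪J x, u⟫ * σ (J y) z - ⟪J y, u⟫ * σ (J x) z - 2 * ⟪J z, u⟫ * σ (J x) y :=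
  rfl

variable {σ : V →ₗ[ℝ] V →ₗ[ℝ] ℝ}

theorem isCurvatureLike_psi (hJ : IsOrthogonalComplexStructure J) (hσ : ∀ a b, σ a b = σ b a)
    (hσJ : ∀ a b, σ (J a) (J b) = σ a b) : IsCurvatureLike (psi J σ) := by
  have hω := hJ.inner_apply_left
  have hτ := hJ.apply_map_left hσ hσJ
  refine ⟨fun x y z u => ?_, fun x y z u => ?_, fun x y z u => ?_, fun x y z u => ?_⟩ <;>
    simp only [psi_apply]
  · simp only [hω y x, hτ y x]; ring
  · simp only [hω u z, hτ u z]; ring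
  · simp only [hω u x, hτ z y, hω z x, hτ u y, hω z y, hτ u x, hω u y, hτ z x]; ring
  · simp only [hω z x, hω y x, hω z y, hτ z x, hτ y x, hτ z y]; ring

theorem psi_map_map (hJ : IsOrthogonalComplexStructure J) (hσJ : ∀ a b, σ (J a) (J b) = σ a b)
    (x y z u : V) : psi J σ (J x) (J y) (J z) (J u) = psi J σ x y z u := by
  simp only [psi_apply, hJ.inner_apply_apply, hσJ]

theorem psi_apply_eq_zero_of_inner_eq_zero (hJ : IsOrthogonalComplexStructure J) {x y : V}
    (hxy : ⟪J x, y⟫ = 0) : psi J σ x y y x = 0 := by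
  simp only [psi_apply, hJ.inner_apply_self, hxy, hJ.inner_apply_left y x]
  ring

theorem ricci_psi (hJ : IsOrthogonalComplexStructure J) (hσ : ∀ a b, σ a b = σ b a)
    (hσJ : ∀ a b, σ (J a) (J b) = σ a b) (e : OrthonormalBasis ι ℝ V) :
    ricci e (psi J σ) = (6 : ℝ) • σ := by
  ext x w
  have h₁ := e.sum_inner_mul_apply (σ.flip w ∘ₗ J) (J x)
  have h₂ := e.sum_inner_mul_apply (σ (J x)) (J w)
  simp only [LinearMap.comp_apply, LinearMap.flip_apply, hJ.apply_apply, map_neg,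
    hσJ] at h₁ h₂
  calc ricci e (psi J σ) x w
      = ∑ i, (-3 * (⟪J x, e i⟫ * σ (J (e i)) w) + 3 * (⟪J w, e i⟫ * σ (J x) (e i))) := by
        simp only [ricci_apply, psi_apply]
        refine Finset.sum_congr rfl fun i _ => ?_
        rw [hJ.inner_apply_self, hJ.apply_map_self hσ hσJ, hJ.inner_apply_left (e i) w]
        ring
    _ = ((6 : ℝ) • σ) x w := by
        rw [Finset.sum_add_distrib, ← Finset.mul_sum, ← Finset.mul_sum, h₁, h₂]
        simp only [LinearMap.smul_apply, smul_eq_mul]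
        ring

end Tensors

namespace IsCurvatureLike

variable {ι : Type*} [Fintype ι] {J : V →ₗ[ℝ] V}
  {Q : V →ₗ[ℝ] V →ₗ[ℝ] V →ₗ[ℝ] V →ₗ[ℝ] ℝ}

theorem apply_eq_zero_of_forall_norm_eq_one (hQ : IsCurvatureLike Q)
    (hJ : IsOrthogonalComplexStructure J)
    (h : ∀ x y : V, ‖x‖ = 1 → ‖y‖ = 1 → ⟪x, y⟫ = 0 → ⟪y, J x⟫ = 0 → Q x y y x = 0)
    {x y : V} (hxy : ⟪J x, y⟫ = 0) : Q x y y x = 0 := by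
  rcases eq_or_ne x 0 with rfl | hx
  · simp
  set y' := ⟪x, x⟫ • y - ⟪x, y⟫ • x
  have hy'x : ⟪y', J x⟫ = 0 := by
    rw [real_inner_comm, inner_sub_right, real_inner_smul_right, real_inner_smul_right, hxy,
      hJ.inner_apply_self]
    ring
  have hscale : Q x y' y' x = ⟪x, x⟫ ^ 2 * Q x y y x := by
    simp only [y', map_sub, map_smul, LinearMap.sub_apply, LinearMap.smul_apply, smul_eq_mul,
      hQ.apply_self_left, hQ.apply_self_right]
    ring
  have hy' : Q x y' y' x = 0 := by
    rcases eq_or_ne y' 0 with h0 | hy'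
    · rw [h0]; simp
    have hunit := h (‖x‖⁻¹ • x) (‖y'‖⁻¹ • y') (norm_smul_inv_norm hx) (norm_smul_inv_norm hy')
      (by rw [real_inner_smul_left, real_inner_smul_right, inner_inner_self_smul_sub_smul]; simp)
      (by rw [map_smul, real_inner_smul_left, real_inner_smul_right, hy'x]; simp)
    simpa [hx, hy'] using hunit
  rw [hscale] at hy'
  exact (mul_eq_zero.1 hy').resolve_left (pow_ne_zero 2 (inner_self_ne_zero.2 hx))

theorem eq_smul_psi_ricci (hQ : IsCurvatureLike Q) (hJ : IsOrthogonalComplexStructure J)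
    (hQJ : ∀ x y z u, Q x y z u = Q (J x) (J y) (J z) (J u))
    (hQ0 : ∀ x y, ⟪J x, y⟫ = 0 → Q x y y x = 0) (e : OrthonormalBasis ι ℝ V) (x y z u : V) :
    Q x y z u = 1 / 6 * psi J (ricci e Q) x y z u := by
  have hσ := hQ.ricci_comm e
  have hσJ := ricci_map_map hJ hQJ e
  set T := Q + (-(1 / 6) : ℝ) • psi J (ricci e Q)
  have hT : IsCurvatureLike T := hQ.add ((isCurvatureLike_psi hJ hσ hσJ).smul _)
  have hTJ : ∀ x y z u, T x y z u = T (J x) (J y) (J z) (J u) := fun x y z u => by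
    simp only [T, LinearMap.add_apply, LinearMap.smul_apply, psi_map_map hJ hσJ, ← hQJ]
  have hT0 : ∀ x y, ⟪J x, y⟫ = 0 → T x y y x = 0 := fun x y hxy => by
    simp only [T, LinearMap.add_apply, LinearMap.smul_apply, hQ0 x y hxy,
      psi_apply_eq_zero_of_inner_eq_zero hJ hxy, smul_zero, add_zero]
  have hric : ricci e T = 0 := by
    ext
    simp only [T, map_add, map_smul, ricci_psi hJ hσ hσJ, LinearMap.add_apply,
      LinearMap.smul_apply, smul_eq_mul, LinearMap.zero_apply]
    ring
  have h := congr($(hT.eq_zero_of_ricci_eq_zero hJ hTJ hT0 e hric) x y z u)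
  simp only [T, LinearMap.add_apply, LinearMap.smul_apply, smul_eq_mul,
    LinearMap.zero_apply] at h
  linarith

end IsCurvatureLike

end

theorem stmt_1_general {V : Type*} [NormedAddCommGroup V] [InnerProductSpace ℝ V]
    (n : ℕ)
    (J : V →ₗ[ℝ] V)
    (hJ2 : ∀ x : V, J (J x) = -x)
    (hJorth : ∀ x y : V, ⟪J x, J y⟫ = ⟪x, y⟫)
    (R : V →ₗ[ℝ] V →ₗ[ℝ] V →ₗ[ℝ] V →ₗ[ℝ] ℝ)
    (hR : IsCurvatureLike R)
    (hRJ : ∀ x y z u : V, R x y z u = R (J x) (J y) (J z) (J u))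
    (e : OrthonormalBasis (Fin (2 * n)) ℝ V)
    -- the Ricci tensor of `R` with respect to the orthonormal basis `e`
    (S : V → V → ℝ) (hS : ∀ x y : V, S x y = ∑ i, R x (e i) (e i) y)
    -- the tensors R₁, R₂ and ψ
    (R₁ : V → V → V → V → ℝ)
    (hR₁ : ∀ x y z u : V, R₁ x y z u = ⟪y, z⟫ * ⟪x, u⟫ - ⟪x, z⟫ * ⟪y, u⟫)
    (R₂ : V → V → V → V → ℝ)
    (hR₂ : ∀ x y z u : V, R₂ x y z u =
      ⟪J y, z⟫ * ⟪J x, u⟫ - ⟪J x, z⟫ * ⟪J y, u⟫ - 2 * ⟪J x, y⟫ * ⟪J z, u⟫)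
    (ψ : V → V → V → V → ℝ)
    (hψ : ∀ x y z u : V, ψ x y z u =
      ⟪J y, z⟫ * S (J x) u - ⟪J x, z⟫ * S (J y) u - 2 * ⟪J x, y⟫ * S (J z) u
      + ⟪J x, u⟫ * S (J y) z - ⟪J y, u⟫ * S (J x) z - 2 * ⟪J z, u⟫ * S (J x) y)
    -- `R` has constant antiholomorphic sectional curvature ν
    (ν : ℝ)
    (hν : ∀ x y : V, ‖x‖ = 1 → ‖y‖ = 1 → ⟪x, y⟫ = 0 → ⟪y, J x⟫ = 0 →
      R x y y x = ν) :
    ∀ x y z u : V, R x y z u =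
      (1 / 6) * ψ x y z u + ν * R₁ x y z u
        - ((2 * (n : ℝ) - 1) / 3) * ν * R₂ x y z u := by
  have hJ : IsOrthogonalComplexStructure J := ⟨hJ2, hJorth⟩
  set Q := R + (-ν) • constCurvatureTensor V
  have hQ : IsCurvatureLike Q := hR.add (isCurvatureLike_constCurvatureTensor.smul _)
  have hQJ : ∀ x y z u, Q x y z u = Q (J x) (J y) (J z) (J u) := fun x y z u => by
    simp only [Q, LinearMap.add_apply, LinearMap.smul_apply, constCurvatureTensor_map_map hJ,
      ← hRJ]
  have hQ0 : ∀ x y, ⟪J x, y⟫ = 0 → Q x y y x = 0 := fun x y =>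
    hQ.apply_eq_zero_of_forall_norm_eq_one hJ fun x y hx hy hxy hyx => by
      simp only [Q, LinearMap.add_apply, LinearMap.smul_apply, constCurvatureTensor_apply,
        smul_eq_mul, hν x y hx hy hxy hyx, real_inner_self_eq_norm_sq, hx, hy, hxy,
        real_inner_comm x y]
      ring
  have hric : ∀ a b, ricci e Q a b = S a b - (2 * n - 1) * ν * ⟪a, b⟫ := fun a b => by
    simp only [Q, map_add, map_smul, LinearMap.add_apply, LinearMap.smul_apply,
      ricci_constCurvatureTensor, Fintype.card_fin, smul_eq_mul]
    rw [ricci_apply, ← hS]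
    push_cast
    ring
  intro x y z u
  have h := hQ.eq_smul_psi_ricci hJ hQJ hQ0 e x y z u
  simp only [Q, LinearMap.add_apply, LinearMap.smul_apply, smul_eq_mul,
    constCurvatureTensor_apply, psi_apply, hric] at h
  rw [hψ, hR₁, hR₂]
  linear_combination h

theorem stmt_1 {V : Type*} [NormedAddCommGroup V] [InnerProductSpace ℝ V]
    [FiniteDimensional ℝ V] (n : ℕ) (hn : 2 ≤ n)
    (hdim : Module.finrank ℝ V = 2 * n)
    (J : V →ₗ[ℝ] V)
    (hJ2 : ∀ x : V, J (J x) = -x)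
    (hJorth : ∀ x y : V, ⟪J x, J y⟫ = ⟪x, y⟫)
    (R : V →ₗ[ℝ] V →ₗ[ℝ] V →ₗ[ℝ] V →ₗ[ℝ] ℝ)
    (hR : IsCurvatureLike R)
    (hRJ : ∀ x y z u : V, R x y z u = R (J x) (J y) (J z) (J u))
    (e : OrthonormalBasis (Fin (2 * n)) ℝ V)
    -- the Ricci tensor of `R` with respect to the orthonormal basis `e`
    (S : V → V → ℝ) (hS : ∀ x y : V, S x y = ∑ i, R x (e i) (e i) y)
    -- the tensors R₁, R₂ and ψ
    (R₁ : V → V → V → V → ℝ)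
    (hR₁ : ∀ x y z u : V, R₁ x y z u = ⟪y, z⟫ * ⟪x, u⟫ - ⟪x, z⟫ * ⟪y, u⟫)
    (R₂ : V → V → V → V → ℝ)
    (hR₂ : ∀ x y z u : V, R₂ x y z u =
      ⟪J y, z⟫ * ⟪J x, u⟫ - ⟪J x, z⟫ * ⟪J y, u⟫ - 2 * ⟪J x, y⟫ * ⟪J z, u⟫)
    (ψ : V → V → V → V → ℝ)
    (hψ : ∀ x y z u : V, ψ x y z u =
      ⟪J y, z⟫ * S (J x) u - ⟪J x, z⟫ * S (J y) u - 2 * ⟪J x, y⟫ * S (J z) u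
      + ⟪J x, u⟫ * S (J y) z - ⟪J y, u⟫ * S (J x) z - 2 * ⟪J z, u⟫ * S (J x) y)
    -- `R` has constant antiholomorphic sectional curvature ν
    (ν : ℝ)
    (hν : ∀ x y : V, ‖x‖ = 1 → ‖y‖ = 1 → ⟪x, y⟫ = 0 → ⟪y, J x⟫ = 0 →
      R x y y x = ν) :
    ∀ x y z u : V, R x y z u =
      (1 / 6) * ψ x y z u + ν * R₁ x y z u
        - ((2 * (n : ℝ) - 1) / 3) * ν * R₂ x y z u :=
  stmt_1_general n J hJ2 hJorth R hR hRJ e S hS R₁ hR₁ R₂ hR₂ ψ hψ ν hν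
end

section
/- Let V be a real inner product space of dimension 2n (n ≥ 2) with an orthogonal complex structure J, and let R be a curvature-like tensor on V satisfying R(x,y,z,u) = R(Jx,Jy,Jz,Ju) for all x, y, z, u. If R has constant antiholomorphic sectional curvature ν, then ν = ((2n+1)τ − 3τ') / (8n(n² − 1)). -/
open scoped RealInnerProductSpace

namespace OrthonormalBasis

variable {V ι κ : Type*} [NormedAddCommGroup V] [InnerProductSpace ℝ V] [Fintype ι] [Fintype κ]

theorem sum_diag_eq (b : OrthonormalBasis ι ℝ V) (c : OrthonormalBasis κ ℝ V)
    (T : V →ₗ[ℝ] V →ₗ[ℝ] ℝ) : ∑ i, T (b i) (b i) = ∑ j, T (c j) (c j) :=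
  calc ∑ i, T (b i) (b i) = ∑ i, ∑ j, T (c j) (⟪b i, c j⟫ • b i) := by
        refine Finset.sum_congr rfl fun i _ => ?_
        nth_rw 1 [← c.sum_repr' (b i)]
        simp only [map_sum, map_smul, LinearMap.sum_apply, LinearMap.smul_apply, smul_eq_mul,
          real_inner_comm]
    _ = ∑ j, T (c j) (c j) := by
        rw [Finset.sum_comm]
        simp only [← map_sum, b.sum_repr']

theorem sum_sum_contract_eq (b : OrthonormalBasis ι ℝ V) (c : OrthonormalBasis κ ℝ V)
    (F : V →ₗ[ℝ] V →ₗ[ℝ] V →ₗ[ℝ] V →ₗ[ℝ] ℝ) :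
    ∑ i, ∑ j, F (b i) (b j) (b j) (b i) = ∑ i, ∑ j, F (c i) (c j) (c j) (c i) :=
  calc ∑ i, ∑ j, F (b i) (b j) (b j) (b i) = ∑ i, ∑ j, F (b i) (c j) (c j) (b i) :=
        Finset.sum_congr rfl fun i _ => b.sum_diag_eq c ((F (b i)).compr₂ (.applyₗ (b i)))
    _ = ∑ j, ∑ i, F (b i) (c j) (c j) (b i) := Finset.sum_comm
    _ = ∑ j, ∑ i, F (c i) (c j) (c j) (c i) :=
        Finset.sum_congr rfl fun j _ => b.sum_diag_eq c ((F.flip (c j)).flip (c j))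
    _ = _ := Finset.sum_comm

end OrthonormalBasis

theorem sum_sum_diag_offDiag {ι : Type*} [Fintype ι] [DecidableEq ι] (A B : ι → ι → ℝ)
    (H : ι → ℝ) (ν : ℝ) (hA : ∀ k, A k k = 2 * H k) (hB : ∀ k, B k k = 2 * H k)
    (hA' : ∀ k l, k ≠ l → A k l = 4 * ν)
    (hB' : ∀ k l, k ≠ l → 3 * B k l = 2 * (H k + H l) - 4 * ν) :
    (2 * Fintype.card ι + 1) * ∑ k, ∑ l, A k l - 3 * ∑ k, ∑ l, B k l
      = 8 * Fintype.card ι * ((Fintype.card ι : ℝ) ^ 2 - 1) * ν := by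
  set N : ℝ := (Fintype.card ι : ℝ)
  have hterm : ∀ k l, (2 * N + 1) * A k l - 3 * B k l
      = 8 * (N + 1) * ν - 2 * (H k + H l) + if k = l then 4 * N * H k - 8 * (N + 1) * ν else 0 := by
    intro k l
    obtain rfl | hkl := eq_or_ne k l
    · simp only [hA, hB, if_true]
      ring
    · rw [hA' k l hkl, if_neg hkl]
      linear_combination -(hB' k l hkl)
  calc (2 * N + 1) * ∑ k, ∑ l, A k l - 3 * ∑ k, ∑ l, B k l
      = ∑ k, ∑ l, ((2 * N + 1) * A k l - 3 * B k l) := by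
        simp only [Finset.mul_sum, Finset.sum_sub_distrib]
    _ = ∑ k, ∑ l, (8 * (N + 1) * ν - 2 * (H k + H l)
          + if k = l then 4 * N * H k - 8 * (N + 1) * ν else 0) := by
        simp only [hterm]
    _ = 8 * N * (N ^ 2 - 1) * ν := by
        simp only [Finset.sum_add_distrib, Finset.sum_sub_distrib, Finset.sum_ite_eq,
          Finset.mem_univ, if_true, Finset.sum_const, Finset.card_univ, nsmul_eq_mul,
          ← Finset.mul_sum]
        ring

theorem Fintype.sum_sum_elim {ι α M : Type*} [Fintype ι] [AddCommMonoid M] (x y : ι → α)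
    (f : α → α → M) :
    ∑ i, ∑ j, f (Sum.elim x y i) (Sum.elim x y j)
      = ∑ k, ∑ l, (f (x k) (x l) + f (x k) (y l) + f (y k) (x l) + f (y k) (y l)) := by
  simp only [Fintype.sum_sum_type, Sum.elim_inl, Sum.elim_inr, Finset.sum_add_distrib]
  abel

structure IsOrthogonalComplexStructure_s3 {V : Type*} [NormedAddCommGroup V] [InnerProductSpace ℝ V]
    (J : V →ₗ[ℝ] V) : Prop where
  map_map : ∀ x, J (J x) = -x
  inner_map_map : ∀ x y, ⟪J x, J y⟫ = ⟪x, y⟫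

namespace IsOrthogonalComplexStructure_s3

variable {V : Type*} [NormedAddCommGroup V] [InnerProductSpace ℝ V] {J : V →ₗ[ℝ] V}

theorem inner_map_left (hJ : IsOrthogonalComplexStructure_s3 J) (x y : V) :
    ⟪J x, y⟫ = -⟪x, J y⟫ := by
  rw [← hJ.inner_map_map (J x) y, hJ.map_map, inner_neg_left]

theorem inner_map_self (hJ : IsOrthogonalComplexStructure_s3 J) (x : V) : ⟪x, J x⟫ = 0 := by
  have := hJ.inner_map_left x x
  rw [real_inner_comm] at this
  linarith

theorem inner_map_swap (hJ : IsOrthogonalComplexStructure_s3 J) (x y : V) :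
    ⟪y, J x⟫ = -⟪x, J y⟫ := by
  rw [real_inner_comm, hJ.inner_map_left]

theorem norm_map (hJ : IsOrthogonalComplexStructure_s3 J) (x : V) : ‖J x‖ = ‖x‖ := by
  rw [norm_eq_sqrt_real_inner, norm_eq_sqrt_real_inner, hJ.inner_map_map]

theorem exists_adapted_family (hJ : IsOrthogonalComplexStructure_s3 J) [FiniteDimensional ℝ V] :
    ∀ m : ℕ, 2 * m ≤ Module.finrank ℝ V →
      ∃ x : Fin m → V, ∀ k l, ⟪x k, x l⟫ = (if k = l then 1 else 0) ∧ ⟪x k, J (x l)⟫ = 0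
  | 0, _ => ⟨Fin.elim0, fun k => k.elim0⟩
  | m + 1, hm => by
    obtain ⟨x, hx⟩ := exists_adapted_family hJ m (by omega)
    let W := Submodule.span ℝ (Set.range (Sum.elim x (J ∘ x)))
    have hW : W ≠ ⊤ := fun h => by
      have := finrank_range_le_card (R := ℝ) (Sum.elim x (J ∘ x))
      change Module.finrank ℝ W ≤ _ at this
      rw [h, finrank_top, Fintype.card_sum, Fintype.card_fin] at this
      omega
    obtain ⟨u, huW, hu⟩ : ∃ u ∈ Wᗮ, ‖u‖ = 1 := by
      obtain ⟨w, hwW, hw0⟩ := Submodule.exists_mem_ne_zero_of_ne_bot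
        (mt Submodule.orthogonal_eq_bot_iff.mp hW)
      exact ⟨‖w‖⁻¹ • w, Wᗮ.smul_mem _ hwW, norm_smul_inv_norm hw0⟩
    have hspan : ∀ i, Sum.elim x (J ∘ x) i ∈ W := fun i =>
      Submodule.subset_span (Set.mem_range_self i)
    have hux : ∀ k, ⟪u, x k⟫ = 0 := fun k =>
      Submodule.inner_left_of_mem_orthogonal (hspan (.inl k)) huW
    have huJx : ∀ k, ⟪u, J (x k)⟫ = 0 := fun k =>
      Submodule.inner_left_of_mem_orthogonal (hspan (.inr k)) huW
    have hxu : ∀ k, ⟪x k, u⟫ = 0 := fun k => by rw [real_inner_comm, hux]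
    have hxJu : ∀ k, ⟪x k, J u⟫ = 0 := fun k => by rw [hJ.inner_map_swap, huJx, neg_zero]
    refine ⟨Fin.cons u x, fun k l => ?_⟩
    refine Fin.cases ?_ (fun i => ?_) k <;> refine Fin.cases ?_ (fun j => ?_) l <;>
      simp [hu, hJ.inner_map_self, hux, huJx, hxu, hxJu, hx, Fin.succ_ne_zero,
        (Fin.succ_ne_zero _).symm]

theorem exists_adapted_orthonormalBasis (hJ : IsOrthogonalComplexStructure_s3 J)
    [FiniteDimensional ℝ V] {n : ℕ} (hdim : Module.finrank ℝ V = 2 * n) :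
    ∃ (x : Fin n → V) (g : OrthonormalBasis (Fin n ⊕ Fin n) ℝ V), ⇑g = Sum.elim x (J ∘ x) := by
  obtain ⟨x, hx⟩ := hJ.exists_adapted_family n hdim.ge
  have hon : Orthonormal ℝ (Sum.elim x (J ∘ x)) := by
    rw [orthonormal_iff_ite]
    rintro (k | k) (l | l) <;>
      simp [hx, hJ.inner_map_map, hJ.inner_map_left]
  have hcard : Fintype.card (Fin n ⊕ Fin n) = Module.finrank ℝ V := by rw [Fintype.card_sum, Fintype.card_fin, hdim, two_mul]
  exact ⟨x, .mk hon (hon.linearIndependent.span_eq_top_of_card_eq_finrank' hcard).ge,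
    OrthonormalBasis.coe_mk _ _⟩

end IsOrthogonalComplexStructure_s3

def HasConstAntiholomorphicCurvature {V : Type*} [NormedAddCommGroup V] [InnerProductSpace ℝ V]
    (J : V →ₗ[ℝ] V) (R : V →ₗ[ℝ] V →ₗ[ℝ] V →ₗ[ℝ] V →ₗ[ℝ] ℝ) (ν : ℝ) : Prop :=
  ∀ x y : V, ‖x‖ = 1 → ‖y‖ = 1 → ⟪x, y⟫ = 0 → ⟪y, J x⟫ = 0 → R x y y x = ν

namespace HasConstAntiholomorphicCurvature

variable {V : Type*} [NormedAddCommGroup V] [InnerProductSpace ℝ V] {J : V →ₗ[ℝ] V}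
  {R : V →ₗ[ℝ] V →ₗ[ℝ] V →ₗ[ℝ] V →ₗ[ℝ] ℝ} {ν : ℝ}

theorem apply_eq (hν : HasConstAntiholomorphicCurvature J R ν) {a b : V} (hab : ⟪a, b⟫ = 0)
    (hba : ⟪b, J a⟫ = 0) : R a b b a = ν * ⟪a, a⟫ * ⟪b, b⟫ := by
  rcases eq_or_ne a 0 with rfl | ha
  · simp
  rcases eq_or_ne b 0 with rfl | hb
  · simp
  have key := hν (‖a‖⁻¹ • a) (‖b‖⁻¹ • b) (norm_smul_inv_norm ha) (norm_smul_inv_norm hb)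
    (by simp [real_inner_smul_left, real_inner_smul_right, hab])
    (by simp [real_inner_smul_left, real_inner_smul_right, hba])
  simp only [map_smul, LinearMap.smul_apply, smul_eq_mul] at key
  rw [real_inner_self_eq_norm_mul_norm, real_inner_self_eq_norm_mul_norm]
  field_simp at key
  linear_combination key

theorem apply_add_apply_eq (hν : HasConstAntiholomorphicCurvature J R ν) {a b c : V}
    (hab : ⟪a, b⟫ = 0) (hba : ⟪b, J a⟫ = 0) (hac : ⟪a, c⟫ = 0) (hca : ⟪c, J a⟫ = 0) :
    R a b c a + R a c b a = 2 * ν * ⟪a, a⟫ * ⟪b, c⟫ := by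
  have hsum := hν.apply_eq (a := a) (b := b + c) (by simp [inner_add_right, hab, hac])
    (by simp [inner_add_left, hba, hca])
  simp only [map_add, LinearMap.add_apply, inner_add_left, inner_add_right] at hsum
  linear_combination hsum - hν.apply_eq hab hba - hν.apply_eq hac hca
    - ν * ⟪a, a⟫ * real_inner_comm c b

theorem polarization (hν : HasConstAntiholomorphicCurvature J R ν) {a d b c : V}
    (hab : ⟪a, b⟫ = 0) (hba : ⟪b, J a⟫ = 0) (hac : ⟪a, c⟫ = 0) (hca : ⟪c, J a⟫ = 0)
    (hdb : ⟪d, b⟫ = 0) (hbd : ⟪b, J d⟫ = 0) (hdc : ⟪d, c⟫ = 0) (hcd : ⟪c, J d⟫ = 0) :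
    R a b c d + R d b c a + R a c b d + R d c b a = 4 * ν * ⟪a, d⟫ * ⟪b, c⟫ := by
  have hsum := hν.apply_add_apply_eq (a := a + d) (b := b) (c := c)
    (by simp [inner_add_left, hab, hdb]) (by simp [inner_add_right, hba, hbd])
    (by simp [inner_add_left, hac, hdc]) (by simp [inner_add_right, hca, hcd])
  simp only [map_add, LinearMap.add_apply, inner_add_left, inner_add_right] at hsum
  linear_combination hsum - hν.apply_add_apply_eq hab hba hac hca
    - hν.apply_add_apply_eq hdb hbd hdc hcd - 2 * ν * ⟪b, c⟫ * real_inner_comm d a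

end HasConstAntiholomorphicCurvature

section FirstSlot

variable {V : Type*} [AddCommGroup V] [Module ℝ V] (R : V →ₗ[ℝ] V →ₗ[ℝ] V →ₗ[ℝ] V →ₗ[ℝ] ℝ)

-- `map_neg` and `map_sub` do not fire in the first slot: instance search gives up on the group
-- structure of the threefold iterated space of linear maps, so we pass through `map_smul`.
theorem apply_neg_left₄ (a b c d : V) : R (-a) b c d = -R a b c d := by
  rw [← neg_one_smul ℝ a, map_smul]
  simp

theorem apply_sub_left₄ (a a' b c d : V) : R (a - a') b c d = R a b c d - R a' b c d := by
  rw [sub_eq_add_neg, map_add, LinearMap.add_apply, LinearMap.add_apply, LinearMap.add_apply,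
    apply_neg_left₄, sub_eq_add_neg]

end FirstSlot

section JInvariant

variable {V : Type*} [NormedAddCommGroup V] [InnerProductSpace ℝ V] {J : V →ₗ[ℝ] V}
  {R : V →ₗ[ℝ] V →ₗ[ℝ] V →ₗ[ℝ] V →ₗ[ℝ] ℝ}

theorem apply_map_map_eq_of_invariant (hJ : IsOrthogonalComplexStructure_s3 J)
    (hRJ : ∀ x y z u : V, R x y z u = R (J x) (J y) (J z) (J u)) (a b c d : V) :
    R (J a) (J b) c d = R a b (J c) (J d) := by
  rw [hRJ, hJ.map_map, hJ.map_map, apply_neg_left₄]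
  simp

theorem apply_map_alternate_eq_of_invariant (hJ : IsOrthogonalComplexStructure_s3 J)
    (hRJ : ∀ x y z u : V, R x y z u = R (J x) (J y) (J z) (J u)) (a b c d : V) :
    R (J a) b (J c) d = R a (J b) c (J d) := by
  rw [hRJ, hJ.map_map, hJ.map_map, apply_neg_left₄]
  simp

end JInvariant

section AntiholomorphicPair

variable {V : Type*} [NormedAddCommGroup V] [InnerProductSpace ℝ V] {J : V →ₗ[ℝ] V}
  {R : V →ₗ[ℝ] V →ₗ[ℝ] V →ₗ[ℝ] V →ₗ[ℝ] ℝ} {ν : ℝ} {u v : V}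

theorem sum_sectional_eq (hJ : IsOrthogonalComplexStructure_s3 J)
    (hν : HasConstAntiholomorphicCurvature J R ν) (hu : ‖u‖ = 1) (hv : ‖v‖ = 1)
    (huv : ⟪u, v⟫ = 0) (huJv : ⟪u, J v⟫ = 0) :
    R u v v u + R u (J v) (J v) u + R (J u) v v (J u) + R (J u) (J v) (J v) (J u) = 4 * ν := by
  have hvu : ⟪v, u⟫ = 0 := by rw [real_inner_comm, huv]
  have hvJu : ⟪v, J u⟫ = 0 := by rw [hJ.inner_map_swap, huJv, neg_zero]
  rw [hν.apply_eq (a := u) (b := v), hν.apply_eq (a := u) (b := J v),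
    hν.apply_eq (a := J u) (b := v), hν.apply_eq (a := J u) (b := J v)] <;>
    simp [hJ.inner_map_left, hJ.map_map, hJ.norm_map, hu, hv, huv, hvu, huJv, hvJu]
  ring

theorem apply_map_apply_map_eq_neg (hJ : IsOrthogonalComplexStructure_s3 J)
    (hRJ : ∀ x y z u : V, R x y z u = R (J x) (J y) (J z) (J u))
    (hν : HasConstAntiholomorphicCurvature J R ν) (huv : ⟪u, v⟫ = 0) (huJv : ⟪u, J v⟫ = 0) :
    R u (J v) v (J u) = -R u v (J v) (J u) := by
  have hvu : ⟪v, u⟫ = 0 := by rw [real_inner_comm, huv]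
  have hvJu : ⟪v, J u⟫ = 0 := by rw [hJ.inner_map_swap, huJv, neg_zero]
  have hpol := hν.polarization (a := u) (d := J u) (b := v) (c := J v)
    huv hvJu huJv (by simp [hJ.inner_map_map, hvu]) (by simp [hJ.inner_map_left, huJv])
    (by simp [hJ.map_map, hvu]) (by simp [hJ.inner_map_map, huv])
    (by simp [hJ.map_map, hJ.inner_map_left, hvJu])
  rw [apply_map_alternate_eq_of_invariant hJ hRJ, apply_map_map_eq_of_invariant hJ hRJ,
    hJ.inner_map_self] at hpol
  linarith

theorem apply_map_self_apply_map_self (hJ : IsOrthogonalComplexStructure_s3 J)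
    (hR : IsCurvatureLike R) (hRJ : ∀ x y z u : V, R x y z u = R (J x) (J y) (J z) (J u))
    (hν : HasConstAntiholomorphicCurvature J R ν) (huv : ⟪u, v⟫ = 0) (huJv : ⟪u, J v⟫ = 0) :
    R u (J u) v (J v) = -2 * R u v (J v) (J u) := by
  obtain ⟨h12, h34, hpair, hbianchi⟩ := hR
  have := apply_map_apply_map_eq_neg hJ hRJ hν huv huJv
  linarith [hbianchi u (J u) v (J v), hpair (J u) v u (J v), h34 u (J v) (J u) v,
    h12 v u (J u) (J v), h34 u v (J u) (J v)]

theorem holomorphic_add_holomorphic (hJ : IsOrthogonalComplexStructure_s3 J)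
    (hR : IsCurvatureLike R) (hRJ : ∀ x y z u : V, R x y z u = R (J x) (J y) (J z) (J u))
    (hν : HasConstAntiholomorphicCurvature J R ν) (hu : ‖u‖ = 1) (hv : ‖v‖ = 1)
    (huv : ⟪u, v⟫ = 0) (huJv : ⟪u, J v⟫ = 0) :
    R u (J u) (J u) u + R v (J v) (J v) v - 6 * R u v (J v) (J u) = 2 * ν := by
  have hvu : ⟪v, u⟫ = 0 := by rw [real_inner_comm, huv]
  have hvJu : ⟪v, J u⟫ = 0 := by rw [hJ.inner_map_swap, huJv, neg_zero]
  have hmixed := apply_map_self_apply_map_self hJ hR hRJ hν huv huJv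
  obtain ⟨h12, h34, hpair, -⟩ := hR
  -- `(u ± Jv, v ± Ju)` are antiholomorphic pairs; adding the two identities cancels the terms
  -- of odd degree in the sign.
  have hplus := hν.apply_eq (a := u + J v) (b := v + J u)
    (by simp [inner_add_left, inner_add_right, hJ.map_map, hJ.inner_map_left, hJ.inner_map_self,
      huv, hvu])
    (by simp [inner_add_left, inner_add_right, hJ.map_map, hJ.inner_map_left, hJ.norm_map, hu, hv,
      huJv, hvJu])
  have hminus := hν.apply_eq (a := u - J v) (b := v - J u)
    (by simp [inner_sub_left, inner_sub_right, hJ.map_map, hJ.inner_map_left, hJ.inner_map_self,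
      huv, hvu])
    (by simp [inner_add_right, inner_sub_left, hJ.map_map, hJ.inner_map_left, hJ.norm_map, hu, hv,
      huJv, hvJu])
  simp only [inner_add_left, inner_add_right, inner_sub_left, inner_sub_right, map_add, map_sub,
    LinearMap.add_apply, LinearMap.sub_apply, apply_sub_left₄] at hplus hminus
  simp only [inner_self_eq_norm_sq_to_K, hu, Real.ringHom_apply, one_pow, hJ.inner_map_left, hvJu,
    neg_zero, add_zero, huJv, hJ.norm_map, hv, zero_add, sub_zero, zero_sub, sub_neg_eq_add]
    at hplus hminus
  have huv' := hν u v hu hv huv hvJu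
  have hJvJu := hν (J v) (J u) (by rw [hJ.norm_map, hv]) (by rw [hJ.norm_map, hu])
    (by rw [hJ.inner_map_map, hvu]) (by rw [hJ.inner_map_map, huJv])
  linarith [h12 (J v) v v (J v), h34 v (J v) v (J v), hpair (J v) (J u) v u, h12 v u (J v) (J u),
    hpair (J v) v (J u) u, h12 (J u) u (J v) v, h34 u (J u) (J v) v, h34 u v (J u) (J v)]

theorem sum_prime_eq (hJ : IsOrthogonalComplexStructure_s3 J)
    (hRJ : ∀ x y z u : V, R x y z u = R (J x) (J y) (J z) (J u))
    (hν : HasConstAntiholomorphicCurvature J R ν) (huv : ⟪u, v⟫ = 0) (huJv : ⟪u, J v⟫ = 0) :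
    R u v (J v) (J u) + R u (J v) (J (J v)) (J u) + R (J u) v (J v) (J (J u))
      + R (J u) (J v) (J (J v)) (J (J u)) = 4 * R u v (J v) (J u) := by
  have := apply_map_apply_map_eq_neg hJ hRJ hν huv huJv
  simp only [hJ.map_map, map_neg, LinearMap.neg_apply, neg_neg,
    apply_map_alternate_eq_of_invariant hJ hRJ u v v u, apply_map_map_eq_of_invariant hJ hRJ]
  linarith

end AntiholomorphicPair

section Diagonal

variable {V : Type*} [NormedAddCommGroup V] [InnerProductSpace ℝ V] {J : V →ₗ[ℝ] V}
  {R : V →ₗ[ℝ] V →ₗ[ℝ] V →ₗ[ℝ] V →ₗ[ℝ] ℝ}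

theorem sum_sectional_self (hR : IsCurvatureLike R) (u : V) :
    R u u u u + R u (J u) (J u) u + R (J u) u u (J u) + R (J u) (J u) (J u) (J u)
      = 2 * R u (J u) (J u) u := by
  obtain ⟨h12, -, hpair, -⟩ := hR
  linarith [h12 u u u u, h12 (J u) (J u) (J u) (J u), hpair (J u) u u (J u)]

theorem sum_prime_self (hJ : IsOrthogonalComplexStructure_s3 J) (hR : IsCurvatureLike R) (u : V) :
    R u u (J u) (J u) + R u (J u) (J (J u)) (J u) + R (J u) u (J u) (J (J u))
      + R (J u) (J u) (J (J u)) (J (J u)) = 2 * R u (J u) (J u) u := by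
  obtain ⟨h12, h34, -, -⟩ := hR
  simp only [hJ.map_map, map_neg, LinearMap.neg_apply, neg_neg]
  linarith [h12 u u (J u) (J u), h12 (J u) (J u) u u, h34 u (J u) u (J u), h12 (J u) u (J u) u]

end Diagonal

theorem scalar_curvatures_adapted {V : Type*} [NormedAddCommGroup V] [InnerProductSpace ℝ V]
    {J : V →ₗ[ℝ] V} {R : V →ₗ[ℝ] V →ₗ[ℝ] V →ₗ[ℝ] V →ₗ[ℝ] ℝ} {ν : ℝ} {n : ℕ}
    (hJ : IsOrthogonalComplexStructure_s3 J) (hR : IsCurvatureLike R)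
    (hRJ : ∀ x y z u : V, R x y z u = R (J x) (J y) (J z) (J u))
    (hν : HasConstAntiholomorphicCurvature J R ν) (x : Fin n → V)
    (g : OrthonormalBasis (Fin n ⊕ Fin n) ℝ V) (hg : ⇑g = Sum.elim x (J ∘ x)) :
    (2 * n + 1) * ∑ i, ∑ j, R (g i) (g j) (g j) (g i)
      - 3 * ∑ i, ∑ j, R (g i) (g j) (J (g j)) (J (g i)) = 8 * n * ((n : ℝ) ^ 2 - 1) * ν := by
  have hnorm : ∀ k, ‖x k‖ = 1 := fun k => by
    simpa [hg] using g.orthonormal.1 (.inl k)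
  have horth : ∀ k l, k ≠ l → ⟪x k, x l⟫ = 0 := fun k l hkl => by
    simpa [hg] using g.orthonormal.2 (Sum.inl_injective.ne hkl)
  have hanti : ∀ k l, ⟪x k, J (x l)⟫ = 0 := fun k l => by
    simpa [hg] using g.orthonormal.2 (Sum.inl_ne_inr (a := k) (b := l))
  have key := sum_sum_diag_offDiag
    (fun k l => R (x k) (x l) (x l) (x k) + R (x k) (J (x l)) (J (x l)) (x k)
      + R (J (x k)) (x l) (x l) (J (x k)) + R (J (x k)) (J (x l)) (J (x l)) (J (x k)))
    (fun k l => R (x k) (x l) (J (x l)) (J (x k)) + R (x k) (J (x l)) (J (J (x l))) (J (x k))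
      + R (J (x k)) (x l) (J (x l)) (J (J (x k)))
      + R (J (x k)) (J (x l)) (J (J (x l))) (J (J (x k))))
    (fun k => R (x k) (J (x k)) (J (x k)) (x k)) ν
    (fun k => sum_sectional_self hR (x k)) (fun k => sum_prime_self hJ hR (x k))
    (fun k l hkl => sum_sectional_eq hJ hν (hnorm k) (hnorm l) (horth k l hkl) (hanti k l))
    (fun k l hkl => by
      rw [sum_prime_eq hJ hRJ hν (horth k l hkl) (hanti k l)]
      linarith [holomorphic_add_holomorphic hJ hR hRJ hν (hnorm k) (hnorm l) (horth k l hkl)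
        (hanti k l)])
  rw [Fintype.card_fin] at key
  rw [hg, Fintype.sum_sum_elim x (J ∘ x) (fun a b => R a b b a),
    Fintype.sum_sum_elim x (J ∘ x) (fun a b => R a b (J b) (J a))]
  exact key

theorem stmt_3 {V : Type*} [NormedAddCommGroup V] [InnerProductSpace ℝ V]
    [FiniteDimensional ℝ V] (n : ℕ) (hn : 2 ≤ n)
    (hdim : Module.finrank ℝ V = 2 * n)
    (J : V →ₗ[ℝ] V)
    (hJ2 : ∀ x : V, J (J x) = -x)
    (hJorth : ∀ x y : V, ⟪J x, J y⟫ = ⟪x, y⟫)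
    (R : V →ₗ[ℝ] V →ₗ[ℝ] V →ₗ[ℝ] V →ₗ[ℝ] ℝ)
    (hR : IsCurvatureLike R)
    (hRJ : ∀ x y z u : V, R x y z u = R (J x) (J y) (J z) (J u))
    (e : OrthonormalBasis (Fin (2 * n)) ℝ V)
    -- the Ricci tensor, the tensor S', and the scalar curvatures τ, τ'
    (S : V → V → ℝ) (hS : ∀ x y : V, S x y = ∑ i, R x (e i) (e i) y)
    (S' : V → V → ℝ) (hS' : ∀ x y : V, S' x y = ∑ i, R x (e i) (J (e i)) (J y))
    (τ : ℝ) (hτ : τ = ∑ i, S (e i) (e i))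
    (τ' : ℝ) (hτ' : τ' = ∑ i, S' (e i) (e i))
    -- `R` has constant antiholomorphic sectional curvature ν
    (ν : ℝ)
    (hν : ∀ x y : V, ‖x‖ = 1 → ‖y‖ = 1 → ⟪x, y⟫ = 0 → ⟪y, J x⟫ = 0 →
      R x y y x = ν) :
    ν = ((2 * (n : ℝ) + 1) * τ - 3 * τ') / (8 * (n : ℝ) * ((n : ℝ) ^ 2 - 1)) := by
  have hJ : IsOrthogonalComplexStructure_s3 J := ⟨hJ2, hJorth⟩
  obtain ⟨x, g, hg⟩ := hJ.exists_adapted_orthonormalBasis hdim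
  have hτg : τ = ∑ i, ∑ j, R (g i) (g j) (g j) (g i) := by
    simp only [hτ, hS]
    exact e.sum_sum_contract_eq g R
  have hτ'g : τ' = ∑ i, ∑ j, R (g i) (g j) (J (g j)) (J (g i)) := by
    simp only [hτ', hS', ← apply_map_map_eq_of_invariant hJ hRJ]
    exact e.sum_sum_contract_eq g (R.compl₁₂ J J)
  have hn' : (2 : ℝ) ≤ n := by exact_mod_cast hn
  rw [eq_div_iff (by nlinarith), hτg, hτ'g, scalar_curvatures_adapted hJ hR hRJ hν x g hg]
  ring
end

section
/- Let n ≥ 2 and let V be a real inner product space of dimension 2n with orthonormal basis e₁,…,e_{2n}. Let B, B' : V → Bil(V) be linear maps into bilinear forms on V and let t, t' : V → ℝ be linear functionals such that for all x ∈ V: (i) ∑ᵢ B(eᵢ)(x,eᵢ) = (1/2) t(x); (ii) ∑ᵢ B'(eᵢ)(x,eᵢ) = (1/2) t'(x); (iii) (n+1) B(x)(y,z) − 3 B'(x)(y,z) = (((n+1)t(x) − 3t'(x))/(2n)) ⟨y,z⟩ for all y, z ∈ V. Then (n+1) t(x) = 3 t'(x) for all x ∈ V. -/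
/-!
Write `f = (n + 1) t - 3 t'`. Contracting the tensor `(n + 1) B - 3 B'` in its first and last
slots gives `f / 2` by the Bianchi identities (i), (ii), and gives `f / (2n)` by (iii), since a
tensor `φ x ⟪y, z⟫` contracts to `φ`. As `n ≠ 1`, `f = 0`.
-/

open scoped RealInnerProductSpace

section

variable {ι V : Type*} [Fintype ι] [NormedAddCommGroup V] [InnerProductSpace ℝ V]

theorem OrthonormalBasis.sum_apply_mul_inner (e : OrthonormalBasis ι ℝ V) (φ : V →ₗ[ℝ] ℝ)
    (x : V) : ∑ i, φ (e i) * ⟪x, e i⟫ = φ x := by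
  conv_rhs => rw [← e.sum_repr' x]
  simp only [map_sum, map_smul, smul_eq_mul, real_inner_comm x, mul_comm]

theorem OrthonormalBasis.sum_apply_apply_self_of_eq_mul_inner (e : OrthonormalBasis ι ℝ V)
    (C : V → V → V → ℝ) (φ : V →ₗ[ℝ] ℝ) (hC : ∀ x y z, C x y z = φ x * ⟪y, z⟫) (x : V) :
    ∑ i, C (e i) x (e i) = φ x := by
  simp only [hC, e.sum_apply_mul_inner]

end

theorem stmt_7_general {V : Type*} [NormedAddCommGroup V] [InnerProductSpace ℝ V]
    (n : ℕ) (hn : 2 ≤ n)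
    (e : OrthonormalBasis (Fin (2 * n)) ℝ V)
    -- `B`, `B'` are linear maps from `V` into bilinear forms on `V`
    (B B' : V →ₗ[ℝ] V →ₗ[ℝ] V →ₗ[ℝ] ℝ)
    -- `t`, `t'` are linear functionals on `V`
    (t t' : V →ₗ[ℝ] ℝ)
    -- (i) contracted second Bianchi identity for `S`
    (hi : ∀ x : V, ∑ i, B (e i) x (e i) = (1 / 2) * t x)
    -- (ii) contracted second Bianchi identity for `S'`
    (hii : ∀ x : V, ∑ i, B' (e i) x (e i) = (1 / 2) * t' x)
    -- (iii) the differentiated pointwise identity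
    (hiii : ∀ x y z : V, ((n : ℝ) + 1) * B x y z - 3 * B' x y z =
      ((((n : ℝ) + 1) * t x - 3 * t' x) / (2 * (n : ℝ))) * ⟪y, z⟫) :
    ∀ x : V, ((n : ℝ) + 1) * t x = 3 * t' x := by
  intro x
  set f : V →ₗ[ℝ] ℝ := ((n : ℝ) + 1) • t - (3 : ℝ) • t'
  have hf : ∀ v, f v = ((n : ℝ) + 1) * t v - 3 * t' v := fun _ => rfl
  have hbianchi : ∑ i, (((n : ℝ) + 1) * B (e i) x (e i) - 3 * B' (e i) x (e i)) = f x / 2 := by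
    rw [Finset.sum_sub_distrib, ← Finset.mul_sum, ← Finset.mul_sum, hi, hii, hf]
    ring
  have htrace : ∑ i, (((n : ℝ) + 1) * B (e i) x (e i) - 3 * B' (e i) x (e i)) =
      (2 * (n : ℝ))⁻¹ * f x :=
    e.sum_apply_apply_self_of_eq_mul_inner
      (fun x y z => ((n : ℝ) + 1) * B x y z - 3 * B' x y z) ((2 * (n : ℝ))⁻¹ • f)
      (fun x y z => by rw [hiii, LinearMap.smul_apply, smul_eq_mul, hf, div_eq_inv_mul]) x
  have h2n : (2 : ℝ) ≤ n := by exact_mod_cast hn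
  have hfx : f x = 0 := by
    have hboth := hbianchi.symm.trans htrace
    field_simp at hboth
    nlinarith
  linarith [hf x]

theorem stmt_7 {V : Type*} [NormedAddCommGroup V] [InnerProductSpace ℝ V]
    [FiniteDimensional ℝ V] (n : ℕ) (hn : 2 ≤ n)
    (hdim : Module.finrank ℝ V = 2 * n)
    (e : OrthonormalBasis (Fin (2 * n)) ℝ V)
    -- `B`, `B'` are linear maps from `V` into bilinear forms on `V`
    (B B' : V →ₗ[ℝ] V →ₗ[ℝ] V →ₗ[ℝ] ℝ)
    -- `t`, `t'` are linear functionals on `V`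
    (t t' : V →ₗ[ℝ] ℝ)
    -- (i) contracted second Bianchi identity for `S`
    (hi : ∀ x : V, ∑ i, B (e i) x (e i) = (1 / 2) * t x)
    -- (ii) contracted second Bianchi identity for `S'`
    (hii : ∀ x : V, ∑ i, B' (e i) x (e i) = (1 / 2) * t' x)
    -- (iii) the differentiated pointwise identity
    (hiii : ∀ x y z : V, ((n : ℝ) + 1) * B x y z - 3 * B' x y z =
      ((((n : ℝ) + 1) * t x - 3 * t' x) / (2 * (n : ℝ))) * ⟪y, z⟫) :
    ∀ x : V, ((n : ℝ) + 1) * t x = 3 * t' x :=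
  stmt_7_general n hn e B B' t t' hi hii hiii
end

section
/- Let n ≥ 3 and let V be a real inner product space of dimension 2n with an orthogonal complex structure J. Let T : V → Bil(V) be a linear map into symmetric bilinear forms on V, and let a, t : V → ℝ be linear functionals such that: (i) for every x ∈ V and every orthonormal basis e₁,…,e_{2n} of V, ∑ᵢ T(x)(eᵢ,eᵢ) = t(x) and ∑ᵢ T(eᵢ)(x,eᵢ) = (1/2) t(x); (ii) for all orthonormal x, y ∈ V with ⟨y, Jx⟩ = 0: 4(n−1) a(x) = T(x)(y,y) + T(x)(Jy,Jy) − T(y)(x,y) − T(Jy)(x,Jy); (iii) for every unit vector x ∈ V: 4(n−1) a(x) = (1/2) t(x) − T(x)(Jx,Jx) + T(Jx)(x,Jx). Then a(x) = 0 for all x ∈ V. -/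
open scoped RealInnerProductSpace

/-!
For a unit vector `x`, extend `x, Jx` to an orthonormal basis `b`. Since `J` is an isometry,
`J ∘ b` is an orthonormal basis as well, so by (i) the right-hand side of (12) with `y = b k`,
summed over all `k`, equals `t x`. The two terms with `b k ∈ {x, Jx}` add up to
`t x - 8(n-1) a x` by (13), and each of the remaining `2n - 2` terms equals `4(n-1) a x` by
(12). Hence `(2n - 4) · 4(n - 1) · a x = 0`, and `n ≥ 3` gives `a x = 0`.
-/

theorem LinearMap.eq_zero_of_forall_norm_eq_one {E F : Type*} [NormedAddCommGroup E]
    [NormedSpace ℝ E] [AddCommGroup F] [Module ℝ F] [NoZeroSMulDivisors ℝ F] (f : E →ₗ[ℝ] F)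
    (h : ∀ x, ‖x‖ = 1 → f x = 0) (x : E) : f x = 0 := by
  rcases eq_or_ne x 0 with rfl | hx
  · exact map_zero f
  · have := h _ (norm_smul_inv_norm (𝕜 := ℝ) hx)
    rw [map_smul, smul_eq_zero] at this
    exact this.resolve_left (by simpa using hx)

theorem Fintype.sum_eq_add_add_card_sub_two_mul {ι : Type*} [Fintype ι] {f : ι → ℝ}
    {c : ℝ} {i j : ι} (hij : i ≠ j) (hf : ∀ k, k ≠ i → k ≠ j → f k = c) :
    ∑ k, f k = f i + f j + (Fintype.card ι - 2) * c := by
  have hrest : ∑ k, (f k - c) = (f i - c) + (f j - c) :=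
    Finset.sum_eq_add_of_mem i j (Finset.mem_univ i) (Finset.mem_univ j) hij
      fun k _ hk => sub_eq_zero.2 (hf k hk.1 hk.2)
  rw [Finset.sum_sub_distrib, Finset.sum_const, Finset.card_univ, nsmul_eq_mul] at hrest
  linear_combination hrest

theorem exists_orthonormalBasis_apply_eq_pair {𝕜 E ι : Type*} [RCLike 𝕜] [NormedAddCommGroup E]
    [InnerProductSpace 𝕜 E] [FiniteDimensional 𝕜 E] [Fintype ι]
    (hcard : Module.finrank 𝕜 E = Fintype.card ι) {i j : ι} (hij : i ≠ j) {u v : E}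
    (hu : ‖u‖ = 1) (hv : ‖v‖ = 1) (huv : inner 𝕜 u v = 0) :
    ∃ b : OrthonormalBasis ι 𝕜 E, b i = u ∧ b j = v := by
  classical
  set w : ι → E := fun k => if k = i then u else v
  have hvu : inner 𝕜 v u = 0 := inner_eq_zero_symm.1 huv
  have hw : Orthonormal 𝕜 (({i, j} : Set ι).domRestrict w) := by
    rw [orthonormal_iff_ite]
    rintro ⟨k, hk⟩ ⟨l, hl⟩
    simp only [Set.mem_insert_iff, Set.mem_singleton_iff] at hk hl
    rcases hk with rfl | rfl <;> rcases hl with rfl | rfl <;>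
      simp [w, hij, Ne.symm hij, hu, hv, huv, hvu, inner_self_eq_norm_sq_to_K]
  obtain ⟨b, hb⟩ := hw.exists_orthonormalBasis_extension_of_card_eq hcard
  exact ⟨b, by simpa [w] using hb i (by simp), by simpa [w, Ne.symm hij] using hb j (by simp)⟩

section ComplexStructure

variable {V : Type*} [NormedAddCommGroup V] [InnerProductSpace ℝ V]

theorem inner_self_apply_eq_zero_of_sq_eq_neg {J : V →ₗ[ℝ] V} (hJ2 : ∀ x, J (J x) = -x)
    (hJorth : ∀ x y, ⟪J x, J y⟫ = ⟪x, y⟫) (x : V) : ⟪x, J x⟫ = 0 := by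
  have h := hJorth x (J x)
  rw [hJ2, inner_neg_right, real_inner_comm] at h
  linarith

/-- The right-hand side of identity (12), for the antiholomorphic plane spanned by `x` and `y`. -/
def antiholTerm (T : V →ₗ[ℝ] V →ₗ[ℝ] V →ₗ[ℝ] ℝ) (J : V →ₗ[ℝ] V) (x y : V) : ℝ :=
  T x y y + T x (J y) (J y) - T y x y - T (J y) x (J y)

theorem antiholTerm_self_add_antiholTerm_apply_self (T : V →ₗ[ℝ] V →ₗ[ℝ] V →ₗ[ℝ] ℝ)
    {J : V →ₗ[ℝ] V} (hJ2 : ∀ x, J (J x) = -x) (x : V) :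
    antiholTerm T J x x + antiholTerm T J x (J x) = 2 * (T x (J x) (J x) - T (J x) x (J x)) := by
  simp only [antiholTerm, hJ2, map_neg, LinearMap.neg_apply]
  ring

variable [FiniteDimensional ℝ V] {ι : Type*} [Fintype ι]

theorem sum_antiholTerm_orthonormalBasis (T : V →ₗ[ℝ] V →ₗ[ℝ] V →ₗ[ℝ] ℝ) {J : V →ₗ[ℝ] V}
    (hJorth : ∀ x y, ⟪J x, J y⟫ = ⟪x, y⟫) {x : V} {τ : ℝ}
    (htrace : ∀ e : OrthonormalBasis ι ℝ V,
      (∑ i, T x (e i) (e i) = τ) ∧ (∑ i, T (e i) x (e i) = (1 / 2) * τ))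
    (b : OrthonormalBasis ι ℝ V) : ∑ i, antiholTerm T J x (b i) = τ := by
  let Jb := b.map ((J.isometryOfInner hJorth).toLinearIsometryEquiv rfl)
  have hJb : ∀ i, Jb i = J (b i) := fun i => rfl
  obtain ⟨hb₁, hb₂⟩ := htrace b
  obtain ⟨hJb₁, hJb₂⟩ := htrace Jb
  simp only [hJb] at hJb₁ hJb₂
  simp only [antiholTerm, Finset.sum_sub_distrib, Finset.sum_add_distrib, hb₁, hb₂, hJb₁, hJb₂]
  ring

end ComplexStructure

theorem stmt_8_general {V : Type*} [NormedAddCommGroup V] [InnerProductSpace ℝ V]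
    [FiniteDimensional ℝ V] (n : ℕ) (hn : 3 ≤ n)
    (hdim : Module.finrank ℝ V = 2 * n)
    (J : V →ₗ[ℝ] V)
    (hJ2 : ∀ x : V, J (J x) = -x)
    (hJorth : ∀ x y : V, ⟪J x, J y⟫ = ⟪x, y⟫)
    -- `T` is a linear map from `V` into symmetric bilinear forms on `V`
    (T : V →ₗ[ℝ] V →ₗ[ℝ] V →ₗ[ℝ] ℝ)
    -- `a`, `t` are linear functionals on `V`
    (a t : V →ₗ[ℝ] ℝ)
    -- (i) the definition of τ and the contracted second Bianchi identity
    (hi : ∀ x : V, ∀ e : OrthonormalBasis (Fin (2 * n)) ℝ V,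
      (∑ i, T x (e i) (e i) = t x) ∧ (∑ i, T (e i) x (e i) = (1 / 2) * t x))
    -- (ii) identity (12) of the paper
    (hii : ∀ x y : V, ‖x‖ = 1 → ‖y‖ = 1 → ⟪x, y⟫ = 0 → ⟪y, J x⟫ = 0 →
      4 * ((n : ℝ) - 1) * a x =
        T x y y + T x (J y) (J y) - T y x y - T (J y) x (J y))
    -- (iii) identity (13) of the paper
    (hiii : ∀ x : V, ‖x‖ = 1 →
      4 * ((n : ℝ) - 1) * a x =
        (1 / 2) * t x - T x (J x) (J x) + T (J x) x (J x)) :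
    ∀ x : V, a x = 0 := by
  refine a.eq_zero_of_forall_norm_eq_one fun x hx => ?_
  let i₀ : Fin (2 * n) := ⟨0, by omega⟩
  let i₁ : Fin (2 * n) := ⟨1, by omega⟩
  have hi₀₁ : i₀ ≠ i₁ := Fin.ne_of_val_ne zero_ne_one
  have hJx : ‖J x‖ = 1 := ((J.isometryOfInner hJorth).norm_map x).trans hx
  obtain ⟨b, hb₀, hb₁⟩ := exists_orthonormalBasis_apply_eq_pair (by simp [hdim]) hi₀₁ hx hJx
    (inner_self_apply_eq_zero_of_sq_eq_neg hJ2 hJorth x)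
  have hrest : ∀ k, k ≠ i₀ → k ≠ i₁ → antiholTerm T J x (b k) = 4 * ((n : ℝ) - 1) * a x :=
    fun k hk₀ hk₁ => (hii x (b k) hx (b.orthonormal.1 k) (hb₀ ▸ b.orthonormal.2 hk₀.symm)
      (hb₁ ▸ b.orthonormal.2 hk₁)).symm
  have hsum := sum_antiholTerm_orthonormalBasis T hJorth (hi x) b
  rw [Fintype.sum_eq_add_add_card_sub_two_mul hi₀₁ hrest, hb₀, hb₁,
    antiholTerm_self_add_antiholTerm_apply_self T hJ2, Fintype.card_fin] at hsum
  have hn' : (3 : ℝ) ≤ n := by exact_mod_cast hn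
  have hzero : ((2 * n - 4) * (4 * (n - 1)) : ℝ) * a x = 0 := by
    push_cast at hsum
    linear_combination hsum - 2 * hiii x hx
  exact (mul_eq_zero.1 hzero).resolve_left (by nlinarith)

theorem stmt_8 {V : Type*} [NormedAddCommGroup V] [InnerProductSpace ℝ V]
    [FiniteDimensional ℝ V] (n : ℕ) (hn : 3 ≤ n)
    (hdim : Module.finrank ℝ V = 2 * n)
    (J : V →ₗ[ℝ] V)
    (hJ2 : ∀ x : V, J (J x) = -x)
    (hJorth : ∀ x y : V, ⟪J x, J y⟫ = ⟪x, y⟫)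
    -- `T` is a linear map from `V` into symmetric bilinear forms on `V`
    (T : V →ₗ[ℝ] V →ₗ[ℝ] V →ₗ[ℝ] ℝ)
    (hTsymm : ∀ x y z : V, T x y z = T x z y)
    -- `a`, `t` are linear functionals on `V`
    (a t : V →ₗ[ℝ] ℝ)
    -- (i) the definition of τ and the contracted second Bianchi identity
    (hi : ∀ x : V, ∀ e : OrthonormalBasis (Fin (2 * n)) ℝ V,
      (∑ i, T x (e i) (e i) = t x) ∧ (∑ i, T (e i) x (e i) = (1 / 2) * t x))
    -- (ii) identity (12) of the paper
    (hii : ∀ x y : V, ‖x‖ = 1 → ‖y‖ = 1 → ⟪x, y⟫ = 0 → ⟪y, J x⟫ = 0 →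
      4 * ((n : ℝ) - 1) * a x =
        T x y y + T x (J y) (J y) - T y x y - T (J y) x (J y))
    -- (iii) identity (13) of the paper
    (hiii : ∀ x : V, ‖x‖ = 1 →
      4 * ((n : ℝ) - 1) * a x =
        (1 / 2) * t x - T x (J x) (J x) + T (J x) x (J x)) :
    ∀ x : V, a x = 0 :=
  stmt_8_general n hn hdim J hJ2 hJorth T a t hi hii hiii
end
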